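/- Suppose ℓ_n converges to a limit ℓ with ℓ < 1, and suppose there exist constants c > 0 and s ∈ (ℓ, 1) such that μ_n ≥ c·s^n for all n ≥ 1 (the service rates decay no faster than a geometric series with rate exceeding ℓ). Then the expected delay is finite: Σ_{n=1}^∞ q_n/μ_n < ∞. -/

import Mathlib

open Filter

/-- The recursively defined overflow Laplace–Stieltjes transforms:
`ovLST L0 ms 0 = L0` and
`ovLST L0 ms n s = L_{n-1}(μ_n + s) / (1 - L_{n-1}(s) + L_{n-1}(μ_n + s))`. -/
noncomputable def ovLST (L0 : ℝ → ℝ) (ms : ℕ → ℝ) : ℕ → ℝ → ℝ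
  | 0 => L0
  | n + 1 => fun s =>
      ovLST L0 ms n (ms (n + 1) + s) /
        (1 - ovLST L0 ms n s + ovLST L0 ms n (ms (n + 1) + s))

/-- The blocking probability of the first `n` servers: `p_n = ∏_{i=1}^n L_{i-1}(μ_i)`. -/
noncomputable def blockP (L0 : ℝ → ℝ) (ms : ℕ → ℝ) (n : ℕ) : ℝ :=
  ∏ i ∈ Finset.Icc 1 n, ovLST L0 ms (i - 1) (ms i)

open Topology

/-! Each `L_n` is again positive, equal to `1` at `0` and strictly decreasing, so every
`ℓ_n = L_{n-1}(μ_n)` lies in `(0, 1)` and `p_n` is a positive decreasing product with factors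
tending to `ℓ`. Hence `p_n / s^n` passes the ratio test with ratio `ℓ / s < 1`, and
`0 ≤ q_n / μ_n ≤ p_{n-1} / (c s^n)` is dominated by a summable sequence. -/

/-- The properties of the Laplace–Stieltjes transform of a positive random variable that
survive the overflow recursion. -/
structure IsLSTProfile (f : ℝ → ℝ) : Prop where
  pos : ∀ s, 0 ≤ s → 0 < f s
  map_zero : f 0 = 1
  strictAntiOn : StrictAntiOn f (Set.Ici 0)

namespace IsLSTProfile

variable {f : ℝ → ℝ} {m x : ℝ}

theorem lt_one (hf : IsLSTProfile f) (hx : 0 < x) : f x < 1 :=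
  hf.map_zero ▸ hf.strictAntiOn Set.self_mem_Ici hx.le hx

theorem le_one (hf : IsLSTProfile f) (hx : 0 ≤ x) : f x ≤ 1 := by
  rcases hx.eq_or_lt with rfl | hx
  · exact hf.map_zero.le
  · exact (hf.lt_one hx).le

theorem overflow_denom_pos (hf : IsLSTProfile f) (hm : 0 < m) (hx : 0 ≤ x) :
    0 < 1 - f x + f (m + x) := by
  linarith [hf.le_one hx, hf.pos (m + x) (by linarith)]

theorem overflow (hf : IsLSTProfile f) (hm : 0 < m) :
    IsLSTProfile fun s => f (m + s) / (1 - f s + f (m + s)) where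
  pos x hx := div_pos (hf.pos _ (by linarith)) (hf.overflow_denom_pos hm hx)
  map_zero := by
    rw [add_zero, hf.map_zero, sub_self, zero_add, div_self (hf.pos m hm.le).ne']
  strictAntiOn a ha b hb hab := by
    rw [Set.mem_Ici] at ha hb
    have hfa := hf.strictAntiOn ha hb hab
    have hfma := hf.strictAntiOn (Set.mem_Ici.2 (by linarith : 0 ≤ m + a))
      (Set.mem_Ici.2 (by linarith : 0 ≤ m + b)) (by linarith)
    have hfmb := hf.pos (m + b) (by linarith)
    have h1a := hf.le_one ha
    rw [div_lt_div_iff₀ (hf.overflow_denom_pos hm hb) (hf.overflow_denom_pos hm ha)]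
    -- After clearing denominators the difference is
    -- `f(m+a) (1 - f b) - f(m+b) (1 - f a)`, positive since both factors decrease.
    nlinarith [mul_pos hfmb (sub_pos.2 hfa)]

end IsLSTProfile

theorem summable_of_succ_eq_mul {p r : ℕ → ℝ} {l : ℝ} (hp : ∀ n, p (n + 1) = p n * r n)
    (hp0 : ∀ n, p n ≠ 0) (hr : Tendsto r atTop (𝓝 l)) (hl : |l| < 1) : Summable p := by
  refine summable_of_ratio_test_tendsto_lt_one hl (Eventually.of_forall hp0) ?_
  simp_rw [hp, norm_mul, mul_div_cancel_left₀ _ (norm_ne_zero_iff.2 (hp0 _))]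
  exact hr.norm

section Overflow

variable {L0 : ℝ → ℝ} {ms : ℕ → ℝ}

theorem isLSTProfile_ovLST (hL0 : IsLSTProfile L0) (hms : ∀ n, 1 ≤ n → 0 < ms n) (n : ℕ) :
    IsLSTProfile (ovLST L0 ms n) := by
  induction n with
  | zero => exact hL0
  | succ n ih => exact ih.overflow (hms (n + 1) (Nat.le_add_left 1 n))

theorem blockP_succ (n : ℕ) :
    blockP L0 ms (n + 1) = blockP L0 ms n * ovLST L0 ms n (ms (n + 1)) := by
  rw [blockP, blockP, Finset.prod_Icc_succ_top (Nat.le_add_left 1 n), Nat.add_sub_cancel]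

variable (hL0 : IsLSTProfile L0) (hms : ∀ n, 1 ≤ n → 0 < ms n)
include hL0 hms

theorem ovLST_pos (n : ℕ) : 0 < ovLST L0 ms n (ms (n + 1)) :=
  (isLSTProfile_ovLST hL0 hms n).pos _ (hms (n + 1) (Nat.le_add_left 1 n)).le

theorem blockP_pos (n : ℕ) : 0 < blockP L0 ms n := by
  induction n with
  | zero => simp [blockP]
  | succ n ih => simpa [blockP_succ] using mul_pos ih (ovLST_pos hL0 hms n)

theorem blockP_succ_le (n : ℕ) : blockP L0 ms (n + 1) ≤ blockP L0 ms n := by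
  rw [blockP_succ]
  exact mul_le_of_le_one_right (blockP_pos hL0 hms n).le
    ((isLSTProfile_ovLST hL0 hms n).lt_one (hms (n + 1) (Nat.le_add_left 1 n))).le

theorem summable_blockP_div_pow {l s : ℝ}
    (hl : Tendsto (fun n => ovLST L0 ms n (ms (n + 1))) atTop (𝓝 l)) (hsl : l < s) :
    Summable fun n => blockP L0 ms n / s ^ n := by
  have hl0 : 0 ≤ l := ge_of_tendsto' hl fun n => (ovLST_pos hL0 hms n).le
  have hs0 : 0 < s := hl0.trans_lt hsl
  refine summable_of_succ_eq_mul (r := fun n => ovLST L0 ms n (ms (n + 1)) / s)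
    (fun n => ?_) (fun n => (div_pos (blockP_pos hL0 hms n) (pow_pos hs0 n)).ne')
    (hl.div_const s) ?_
  · rw [blockP_succ, pow_succ]
    field_simp
  · rw [abs_div, abs_of_nonneg hl0, abs_of_pos hs0, div_lt_one hs0]
    exact hsl

end Overflow

theorem stmt_13_general
    (ms : ℕ → ℝ)
    (hms : ∀ n, 1 ≤ n → 0 < ms n)
    (L0 : ℝ → ℝ) (hL00 : L0 0 = 1)
    (hL0pos : ∀ s, 0 ≤ s → 0 < L0 s)
    (hL0anti : StrictAntiOn L0 (Set.Ici 0))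
    (l : ℝ)
    (hl : Tendsto (fun n => ovLST L0 ms n (ms (n + 1))) atTop (nhds l))
    (c s : ℝ) (hc : 0 < c) (hsl : l < s)
    (hbound : ∀ n, 1 ≤ n → c * s ^ n ≤ ms n) :
    Summable (fun n : ℕ =>
      (blockP L0 ms n - blockP L0 ms (n + 1)) / ms (n + 1)) := by
  have hL0 : IsLSTProfile L0 := ⟨hL0pos, hL00, hL0anti⟩
  have hs0 : 0 < s := (ge_of_tendsto' hl fun n => (ovLST_pos hL0 hms n).le).trans_lt hsl
  refine ((summable_blockP_div_pow hL0 hms hl hsl).mul_left (c * s)⁻¹).of_nonneg_of_le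
    (fun n => div_nonneg (sub_nonneg.2 (blockP_succ_le hL0 hms n))
      (hms (n + 1) (Nat.le_add_left 1 n)).le) fun n => ?_
  calc (blockP L0 ms n - blockP L0 ms (n + 1)) / ms (n + 1)
      ≤ blockP L0 ms n / (c * s ^ (n + 1)) := by
        gcongr
        · exact (blockP_pos hL0 hms n).le
        · linarith [blockP_pos hL0 hms (n + 1)]
        · exact hbound (n + 1) (Nat.le_add_left 1 n)
    _ = (c * s)⁻¹ * (blockP L0 ms n / s ^ n) := by
        field_simp
        ring

theorem stmt_13
    (μ : ℝ) (hμ : 0 < μ) (ms : ℕ → ℝ)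
    (hms : ∀ n, 1 ≤ n → 0 < ms n)
    (hsum : HasSum (fun n => ms (n + 1)) μ)
    (L0 : ℝ → ℝ) (hL00 : L0 0 = 1)
    (hL0pos : ∀ s, 0 ≤ s → 0 < L0 s)
    (hL0anti : StrictAntiOn L0 (Set.Ici 0))
    (hL0lim : Tendsto L0 atTop (nhds 0))
    (l : ℝ) (hl1 : l < 1)
    (hl : Tendsto (fun n => ovLST L0 ms n (ms (n + 1))) atTop (nhds l))
    (c s : ℝ) (hc : 0 < c) (hsl : l < s) (hs1 : s < 1)
    (hbound : ∀ n, 1 ≤ n → c * s ^ n ≤ ms n) :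
    Summable (fun n : ℕ =>
      (blockP L0 ms n - blockP L0 ms (n + 1)) / ms (n + 1)) :=
  stmt_13_general ms hms L0 hL00 hL0pos hL0anti l hl c s hc hsl hbound
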